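/- Let G be a tree (a connected simple graph on n ≥ 2 vertices with n−1 edges). Then the inverse degree ρ(G) = Σ_{v} 1/deg(v) (the sum over all vertices of the reciprocal of the degree) satisfies (n+2)/2 ≤ ρ(G) ≤ (n−1) + 1/(n−1). Moreover, the lower bound is attained if and only if G is isomorphic to the path P_n on n vertices, and the upper bound is attained if and only if G is isomorphic to the star S_n on n vertices (the complete bipartite graph K_{1,n−1}). -/

import Mathlib

/-- The inverse degree of a graph on `Fin n`: the sum over all vertices of the
reciprocal of the degree. -/
noncomputable def inverseDegree {n : ℕ} (G : SimpleGraph (Fin n)) : ℝ :=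
  ∑ v : Fin n, (1 : ℝ) / ((G.neighborSet v).ncard : ℝ)

/-!
The degrees `d` of a tree on `n ≥ 2` vertices satisfy `1 ≤ d ≤ n - 1` and sum to `2 (n - 1)`.
Both bounds are sums of pointwise estimates of `1 / d` by affine functions of `d`:
`(3 - d) / 2 ≤ 1 / d` holds for every positive integer, with equality exactly at `d = 1, 2`, and
`1 / d ≤ 1 - (d - 1) / (n - 1)` is the chord of the convex function `1 / d` over `[1, n - 1]`.
So the lower bound is attained iff all degrees are at most `2`, and the upper one iff every degree
is `1` or `n - 1`. A connected graph of maximum degree `2` has a Hamiltonian path, and a vertex of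
degree `n - 1` spans a star; since a tree is a minimal connected graph, it coincides with any
connected spanning subgraph, so it is the path, resp. the star.
-/

open Finset

lemma one_div_sub_three_sub_div_two {x : ℝ} (hx : x ≠ 0) :
    1 / x - (3 - x) / 2 = (x - 1) * (x - 2) / (2 * x) := by
  field_simp
  ring

lemma three_sub_div_two_le_one_div {d : ℕ} (hd : d ≠ 0) : (3 - d : ℝ) / 2 ≤ 1 / d := by
  have hprod : 0 ≤ ((d : ℝ) - 1) * (d - 2) := by
    obtain rfl | h2 : d = 1 ∨ 2 ≤ d := by omega
    · norm_num
    · have : (2 : ℝ) ≤ d := by exact_mod_cast h2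
      nlinarith
  have := one_div_sub_three_sub_div_two (Nat.cast_ne_zero.mpr hd : (d : ℝ) ≠ 0)
  have : 0 ≤ ((d : ℝ) - 1) * (d - 2) / (2 * d) := by positivity
  linarith

lemma one_div_eq_three_sub_div_two_iff {d : ℕ} (hd : d ≠ 0) :
    (1 / d : ℝ) = (3 - d) / 2 ↔ d ≤ 2 := by
  have hd' : (d : ℝ) ≠ 0 := Nat.cast_ne_zero.mpr hd
  rw [← sub_eq_zero, one_div_sub_three_sub_div_two hd', div_eq_zero_iff,
    or_iff_left (mul_ne_zero two_ne_zero hd'), mul_eq_zero, sub_eq_zero, sub_eq_zero]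
  norm_cast
  omega

lemma one_sub_div_sub_one_div {x m : ℝ} (hx : x ≠ 0) (hm : m ≠ 0) :
    1 - (x - 1) / m - 1 / x = (x - 1) * (m - x) / (x * m) := by
  field_simp
  ring

lemma one_div_le_one_sub_div {x m : ℝ} (h1 : 1 ≤ x) (hm : x ≤ m) : 1 / x ≤ 1 - (x - 1) / m := by
  have := one_sub_div_sub_one_div (x := x) (m := m) (by linarith) (by linarith)
  have : 0 ≤ (x - 1) * (m - x) / (x * m) := by
    apply div_nonneg <;> apply mul_nonneg <;> linarith
  linarith

lemma one_div_eq_one_sub_div_iff {x m : ℝ} (h1 : 1 ≤ x) (hm : x ≤ m) :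
    1 / x = 1 - (x - 1) / m ↔ x = 1 ∨ x = m := by
  rw [eq_comm, ← sub_eq_zero, one_sub_div_sub_one_div (by linarith) (by linarith),
    div_eq_zero_iff, or_iff_left (mul_ne_zero (by linarith) (by linarith)), mul_eq_zero,
    sub_eq_zero, sub_eq_zero, eq_comm (a := m)]

namespace SimpleGraph

lemma ncard_neighborSet_eq_degree {V : Type*} {G : SimpleGraph V} (v : V)
    [Fintype (G.neighborSet v)] : (G.neighborSet v).ncard = G.degree v :=
  Set.ncard_eq_toFinset_card' _

section DegreeSums

variable {V : Type*} {G : SimpleGraph V} [Fintype V] [DecidableRel G.Adj]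

lemma one_le_cast_degree (hdeg : ∀ v, G.degree v ≠ 0) (v : V) : (1 : ℝ) ≤ G.degree v := by
  exact_mod_cast Nat.one_le_iff_ne_zero.mpr (hdeg v)

lemma cast_degree_le_card_sub_one (v : V) : (G.degree v : ℝ) ≤ Fintype.card V - 1 := by
  rw [le_sub_iff_add_le]
  exact_mod_cast G.degree_lt_card_verts v

lemma sum_three_sub_degree_div_two :
    ∑ v, (3 - G.degree v : ℝ) / 2 = (3 * Fintype.card V - 2 * #G.edgeFinset) / 2 := by
  rw [← sum_div, sum_sub_distrib, ← Nat.cast_sum, sum_degrees_eq_twice_card_edges, sum_const,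
    card_univ, nsmul_eq_mul, Nat.cast_mul, Nat.cast_ofNat, mul_comm (3 : ℝ)]

lemma le_sum_one_div_degree (hdeg : ∀ v, G.degree v ≠ 0) :
    (3 * Fintype.card V - 2 * #G.edgeFinset : ℝ) / 2 ≤ ∑ v, 1 / (G.degree v : ℝ) :=
  sum_three_sub_degree_div_two.symm.le.trans
    (sum_le_sum fun v _ => three_sub_div_two_le_one_div (hdeg v))

lemma sum_one_div_degree_eq_iff_forall_degree_le_two (hdeg : ∀ v, G.degree v ≠ 0) :
    ∑ v, 1 / (G.degree v : ℝ) = (3 * Fintype.card V - 2 * #G.edgeFinset) / 2 ↔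
      ∀ v, G.degree v ≤ 2 := by
  rw [← sum_three_sub_degree_div_two, eq_comm,
    sum_eq_sum_iff_of_le fun v _ => three_sub_div_two_le_one_div (hdeg v)]
  simp only [mem_univ, true_implies, eq_comm (a := (3 - _ : ℝ) / 2),
    one_div_eq_three_sub_div_two_iff (hdeg _)]

lemma sum_one_sub_degree_sub_one_div (m : ℝ) :
    ∑ v, (1 - (G.degree v - 1 : ℝ) / m) =
      Fintype.card V - (2 * #G.edgeFinset - Fintype.card V) / m := by
  rw [sum_sub_distrib, ← sum_div, sum_sub_distrib, ← Nat.cast_sum,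
    sum_degrees_eq_twice_card_edges]
  simp

lemma sum_one_div_degree_le (hdeg : ∀ v, G.degree v ≠ 0) :
    ∑ v, 1 / (G.degree v : ℝ) ≤
      Fintype.card V - (2 * #G.edgeFinset - Fintype.card V) / (Fintype.card V - 1) :=
  (sum_le_sum fun v _ =>
    one_div_le_one_sub_div (one_le_cast_degree hdeg v) (cast_degree_le_card_sub_one v)).trans
    (sum_one_sub_degree_sub_one_div _).le

lemma sum_one_div_degree_eq_iff (hdeg : ∀ v, G.degree v ≠ 0) :
    ∑ v, 1 / (G.degree v : ℝ) =
        Fintype.card V - (2 * #G.edgeFinset - Fintype.card V) / (Fintype.card V - 1) ↔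
      ∀ v, G.degree v = 1 ∨ G.degree v = Fintype.card V - 1 := by
  rw [← sum_one_sub_degree_sub_one_div, sum_eq_sum_iff_of_le fun v _ =>
    one_div_le_one_sub_div (one_le_cast_degree hdeg v) (cast_degree_le_card_sub_one v)]
  refine forall_congr' fun v => ?_
  rw [one_div_eq_one_sub_div_iff (one_le_cast_degree hdeg v) (cast_degree_le_card_sub_one v),
    ← Nat.cast_pred (Fintype.card_pos_iff.mpr ⟨v⟩)]
  simp only [mem_univ, true_implies]
  norm_cast

end DegreeSums

section TreeBounds

variable {V : Type*} {G : SimpleGraph V} [Fintype V] [DecidableRel G.Adj]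

lemma IsTree.cast_card_edgeFinset (hG : G.IsTree) :
    (#G.edgeFinset : ℝ) = Fintype.card V - 1 := by
  rw [eq_sub_iff_add_eq]
  exact_mod_cast hG.card_edgeFinset

variable [Nontrivial V]

lemma IsTree.degree_ne_zero (hG : G.IsTree) (v : V) : G.degree v ≠ 0 :=
  (hG.connected.preconnected.degree_pos_of_nontrivial v).ne'

lemma IsTree.card_add_two_div_two_le_sum_one_div_degree (hG : G.IsTree) :
    ((Fintype.card V : ℝ) + 2) / 2 ≤ ∑ v, 1 / (G.degree v : ℝ) := by
  convert le_sum_one_div_degree hG.degree_ne_zero using 1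
  rw [hG.cast_card_edgeFinset]
  ring

lemma IsTree.sum_one_div_degree_eq_card_add_two_div_two_iff (hG : G.IsTree) :
    ∑ v, 1 / (G.degree v : ℝ) = ((Fintype.card V : ℝ) + 2) / 2 ↔ ∀ v, G.degree v ≤ 2 := by
  convert sum_one_div_degree_eq_iff_forall_degree_le_two hG.degree_ne_zero using 2
  rw [hG.cast_card_edgeFinset]
  ring

lemma IsTree.card_sub_div_card_sub_one (hG : G.IsTree) :
    (Fintype.card V : ℝ) - (2 * #G.edgeFinset - Fintype.card V) / (Fintype.card V - 1) =
      (Fintype.card V - 1) + 1 / (Fintype.card V - 1) := by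
  have : (Fintype.card V : ℝ) - 1 ≠ 0 := by
    have : (1 : ℝ) < Fintype.card V := by exact_mod_cast Fintype.one_lt_card
    linarith
  rw [hG.cast_card_edgeFinset]
  field_simp
  ring

lemma IsTree.sum_one_div_degree_le (hG : G.IsTree) :
    ∑ v, 1 / (G.degree v : ℝ) ≤ (Fintype.card V - 1) + 1 / (Fintype.card V - 1) :=
  hG.card_sub_div_card_sub_one ▸ SimpleGraph.sum_one_div_degree_le hG.degree_ne_zero

lemma IsTree.sum_one_div_degree_eq_iff (hG : G.IsTree) :
    ∑ v, 1 / (G.degree v : ℝ) = (Fintype.card V - 1) + 1 / (Fintype.card V - 1) ↔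
      ∀ v, G.degree v = 1 ∨ G.degree v = Fintype.card V - 1 :=
  hG.card_sub_div_card_sub_one ▸ SimpleGraph.sum_one_div_degree_eq_iff hG.degree_ne_zero

end TreeBounds

section Trees

variable {V W : Type*} {G : SimpleGraph V} {H : SimpleGraph W}

lemma IsTree.nonempty_iso_of_bijective_hom (hG : G.IsTree) (hH : H.Connected) (f : H →g G)
    (hf : Function.Bijective f) : Nonempty (H ≃g G) := by
  let e := Equiv.ofBijective f hf
  have hle : H.map e.toEmbedding ≤ G := by
    rintro _ _ ⟨-, a, b, hab, rfl, rfl⟩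
    exact f.map_adj hab
  have heq : H.map e.toEmbedding = G :=
    (isTree_iff_minimal_connected.mp hG).eq_of_le ((Iso.map e H).connected_iff.mp hH) hle
  exact ⟨heq ▸ Iso.map e H⟩

lemma Walk.IsPath.mem_support_of_adj_start {a b : V} {p : G.Walk a b}
    (hp : p.IsPath) (hmax : ∀ (x y : V) (q : G.Walk x y), q.IsPath → q.length ≤ p.length)
    {y : V} (hy : G.Adj a y) : y ∈ p.support := by
  by_contra hy'
  have := hmax _ _ _ (hp.cons hy' (h := hy.symm))
  simp at this

/-- A longest path is Hamiltonian: a vertex adjacent to one of its ends would extend it, and an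
internal vertex already has its two neighbours on the path. -/
lemma Connected.exists_isHamiltonian_of_degree_le_two [Fintype V] [DecidableEq V]
    [DecidableRel G.Adj] (hG : G.Connected) (hdeg : ∀ v, G.degree v ≤ 2) :
    ∃ (a b : V) (p : G.Walk a b), p.IsHamiltonian := by
  classical
  let IsPathLength (k : ℕ) : Prop := ∃ (a b : V) (p : G.Walk a b), p.IsPath ∧ p.length = k
  obtain ⟨v⟩ := hG.nonempty
  obtain ⟨a, b, p, hp, hlen⟩ : IsPathLength (Nat.findGreatest IsPathLength (Fintype.card V)) :=
    Nat.findGreatest_spec (Nat.zero_le _) ⟨v, v, .nil, .nil, rfl⟩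
  have hmax : ∀ (x y : V) (q : G.Walk x y), q.IsPath → q.length ≤ p.length := fun x y q hq =>
    hlen ▸ Nat.le_findGreatest hq.length_lt.le ⟨x, y, q, hq, rfl⟩
  have hclosed : ∀ x ∈ p.support, ∀ y, G.Adj x y → y ∈ p.support := by
    intro x hx y hxy
    obtain ⟨i, rfl, hi⟩ := Walk.mem_support_iff_exists_getVert.mp hx
    rcases Nat.eq_zero_or_pos i with rfl | hi0
    · exact hp.mem_support_of_adj_start hmax (by simpa using hxy)
    rcases hi.eq_or_lt with rfl | hil
    · simpa using hp.reverse.mem_support_of_adj_start (by simpa using hmax) (by simpa using hxy)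
    have hsub : p.toSubgraph.neighborSet (p.getVert i) ⊆ G.neighborSet (p.getVert i) :=
      fun _ h => p.toSubgraph.adj_sub h
    have heq := Set.eq_of_subset_of_ncard_le hsub (by
      rw [hp.ncard_neighborSet_toSubgraph_internal_eq_two hi0.ne' hil, ncard_neighborSet_eq_degree]
      exact hdeg _)
    rw [← mem_neighborSet, ← heq] at hxy
    exact p.mem_verts_toSubgraph.mp (p.toSubgraph.edge_vert hxy.symm)
  refine ⟨a, b, p, hp.isHamiltonian_of_mem fun w => ?_⟩
  by_contra hw
  obtain ⟨d, -, hd, hd'⟩ :=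
    (hG.preconnected a w).some.exists_boundary_dart {x | x ∈ p.support} p.start_mem_support hw
  exact hd' (hclosed _ hd _ d.adj)

lemma IsTree.nonempty_iso_pathGraph_of_degree_le_two [Fintype V] [DecidableRel G.Adj]
    (hG : G.IsTree) (hdeg : ∀ v, G.degree v ≤ 2) :
    Nonempty (G ≃g pathGraph (Fintype.card V)) := by
  classical
  obtain ⟨a, b, p, hp⟩ := hG.connected.exists_isHamiltonian_of_degree_le_two hdeg
  have hlen : p.length + 1 = Fintype.card V := p.length_support ▸ hp.length_support
  let f := hp.isPath.pathGraphCopy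
  have hf : Function.Bijective f :=
    (Fintype.bijective_iff_injective_and_card f).mpr ⟨f.injective, by simp [hlen]⟩
  obtain ⟨e⟩ := hG.nonempty_iso_of_bijective_hom (pathGraph_connected _) f.toHom hf
  exact ⟨hlen ▸ e.symm⟩

lemma IsTree.eq_starGraph_of_isUniversal (hG : G.IsTree) {c : V} (hc : G.IsUniversal c) :
    G = starGraph c := by
  refine ((isTree_iff_minimal_connected.mp hG).eq_of_le (connected_starGraph c) ?_).symm
  rintro x y ⟨hxy, rfl | rfl⟩
  exacts [hc hxy, (hc hxy.symm).symm]

lemma IsTree.exists_isUniversal_of_degree_eq_one_or [Fintype V] [DecidableRel G.Adj] (hG : G.IsTree)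
    (hdeg : ∀ v, G.degree v = 1 ∨ G.degree v = Fintype.card V - 1) : ∃ c, G.IsUniversal c := by
  by_contra! hc
  have hleaf : ∀ v, G.degree v = 1 := fun v =>
    (hdeg v).resolve_right (mt (G.degree_eq_card_sub_one v).mp (hc v))
  have hsum := G.sum_degrees_eq_twice_card_edges
  simp only [hleaf, sum_const, card_univ, smul_eq_mul, mul_one] at hsum
  obtain ⟨v⟩ := hG.connected.nonempty
  have := hG.card_edgeFinset
  exact hc v ((G.degree_eq_card_sub_one v).mp (by rw [hleaf v]; omega))

def Iso.starGraph (e : V ≃ W) (c : V) : starGraph c ≃g starGraph (e c) where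
  toEquiv := e
  map_rel_iff' := by simp [e.injective.eq_iff]

lemma completeBipartiteGraph_fin_one_eq_starGraph :
    completeBipartiteGraph (Fin 1) W = starGraph (Sum.inl 0) := by
  ext (a | a) (b | b) <;> simp [Fin.eq_zero]

lemma nonempty_iso_starGraph_completeBipartiteGraph [Fintype V] (c : V) :
    Nonempty (starGraph c ≃g completeBipartiteGraph (Fin 1) (Fin (Fintype.card V - 1))) := by
  have hc := Fintype.card_pos_iff.mpr ⟨c⟩
  let e₀ := Fintype.equivOfCardEq (α := V) (β := Fin 1 ⊕ Fin (Fintype.card V - 1))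
    (by rw [Fintype.card_sum, Fintype.card_fin, Fintype.card_fin]; omega)
  let e := e₀.trans (Equiv.swap (e₀ c) (Sum.inl 0))
  have hec : e c = Sum.inl 0 := by simp [e]
  rw [completeBipartiteGraph_fin_one_eq_starGraph]
  exact ⟨hec ▸ Iso.starGraph e c⟩

lemma degree_starGraph_eq_one_or [Fintype V] [DecidableEq V] (c v : V) :
    (starGraph c).degree v = 1 ∨ (starGraph c).degree v = Fintype.card V - 1 := by
  rcases eq_or_ne v c with rfl | hv
  exacts [Or.inr degree_starGraph_center, Or.inl (degree_starGraph_of_ne_center hv)]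

lemma degree_completeBipartiteGraph_fin_one_eq_one_or [Fintype W] [DecidableEq W]
    [DecidableRel (completeBipartiteGraph (Fin 1) W).Adj] (v : Fin 1 ⊕ W) :
    (completeBipartiteGraph (Fin 1) W).degree v = 1 ∨
      (completeBipartiteGraph (Fin 1) W).degree v = Fintype.card W := by
  have := degree_starGraph_eq_one_or (Sum.inl (0 : Fin 1)) v
  rw [Fintype.card_sum, Fintype.card_fin, Nat.add_sub_cancel_left] at this
  convert this using 3 <;> exact completeBipartiteGraph_fin_one_eq_starGraph

lemma degree_pathGraph_le_two {n : ℕ} [DecidableRel (pathGraph n).Adj] (v : Fin n) :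
    (pathGraph n).degree v ≤ 2 := by
  have : #((pathGraph n).neighborFinset v) ≤ #(univ : Finset Bool) := by
    refine card_le_card_of_injOn (fun u => decide (u < v)) (fun _ _ => mem_univ _) ?_
    intro a ha b hb hab
    simp only [coe_neighborFinset, mem_neighborSet, pathGraph_adj] at ha hb
    simp only [decide_eq_decide, Fin.lt_def] at hab
    omega
  simpa using this

end Trees

end SimpleGraph

lemma inverseDegree_eq_sum_one_div_degree {n : ℕ} (G : SimpleGraph (Fin n))
    [DecidableRel G.Adj] : inverseDegree G = ∑ v, 1 / (G.degree v : ℝ) := by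
  simp only [inverseDegree, SimpleGraph.ncard_neighborSet_eq_degree]

/-- Bounds for the inverse degree of a tree: `(n+2)/2 ≤ ρ(G) ≤ (n-1) + 1/(n-1)`,
with the lower bound attained exactly by the path `P_n` and the upper bound
exactly by the star `S_n = K_{1,n-1}`. -/
theorem tree_inverse_degree_bounds (n : ℕ) (hn : 2 ≤ n)
    (G : SimpleGraph (Fin n)) (hconn : G.Connected)
    (hedges : G.edgeSet.ncard = n - 1) :
    (((n : ℝ) + 2) / 2 ≤ inverseDegree G ∧
      inverseDegree G ≤ ((n : ℝ) - 1) + 1 / ((n : ℝ) - 1)) ∧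
    (inverseDegree G = ((n : ℝ) + 2) / 2 ↔
      Nonempty (G ≃g SimpleGraph.pathGraph n)) ∧
    (inverseDegree G = ((n : ℝ) - 1) + 1 / ((n : ℝ) - 1) ↔
      Nonempty (G ≃g completeBipartiteGraph (Fin 1) (Fin (n - 1)))) := by
  classical
  have : Nontrivial (Fin n) := Fin.nontrivial_iff_two_le.mpr hn
  have hG : G.IsTree := SimpleGraph.isTree_iff_connected_and_card.mpr
    ⟨hconn, by rw [Nat.card_coe_set_eq, hedges, Nat.card_eq_fintype_card, Fintype.card_fin]; omega⟩
  have hlow := hG.card_add_two_div_two_le_sum_one_div_degree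
  have hlow_iff := hG.sum_one_div_degree_eq_card_add_two_div_two_iff
  have hup := hG.sum_one_div_degree_le
  have hup_iff := hG.sum_one_div_degree_eq_iff
  simp only [Fintype.card_fin] at hlow hlow_iff hup hup_iff
  rw [inverseDegree_eq_sum_one_div_degree, hlow_iff, hup_iff]
  refine ⟨⟨hlow, hup⟩, ⟨fun h => ?_, fun ⟨φ⟩ v => ?_⟩, ⟨fun h => ?_, fun ⟨φ⟩ v => ?_⟩⟩
  · have := hG.nonempty_iso_pathGraph_of_degree_le_two h
    rwa [Fintype.card_fin] at this
  · rw [← φ.degree_eq]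
    exact SimpleGraph.degree_pathGraph_le_two _
  · obtain ⟨c, hc⟩ := hG.exists_isUniversal_of_degree_eq_one_or (by simpa using h)
    have := SimpleGraph.nonempty_iso_starGraph_completeBipartiteGraph c
    rwa [Fintype.card_fin, ← hG.eq_starGraph_of_isUniversal hc] at this
  · have := SimpleGraph.degree_completeBipartiteGraph_fin_one_eq_one_or (φ v)
    rw [φ.degree_eq] at this
    simpa using this
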